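/- Let T : [0,1] → [0,1] be Borel measurable with a T-invariant probability measure λ_T satisfying λ_T((0,1)) = 1, and let U₀ be a random variable with law λ_T. Let (x_t)_{t≥1} be a strictly stationary ℝ^l-valued process that is independent of U₀. Let g : (0,1) → ℝ be Borel measurable and injective with Borel measurable inverse on its image, let h : (0,1) → ℝ be Borel measurable, and let α ∈ ℝ, β ∈ ℝ^l. Assume that for every t ≥ 1, α + ⟨x_t, β⟩ + h(T^{t−1}(U₀)) lies in the image g((0,1)) almost surely, and set μ_t := g⁻¹(α + ⟨x_t, β⟩ + h(T^{t−1}(U₀))). Let ν > 0 and let Y = (Y_t)_{t≥1} have the βARC conditional structure with μ = (μ_t)_{t≥1} and precision ν. Then (Y_t)_{t≥1} is strictly stationary. -/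

import Mathlib

open MeasureTheory Set

/-- The density of the Beta(νz, ν(1-z)) distribution on (0,1), as in the paper. -/
noncomputable def betaDen (ν z y : ℝ) : ℝ :=
  Set.indicator (Set.Ioo 0 1)
    (fun y => Real.Gamma ν / (Real.Gamma (ν * z) * Real.Gamma (ν * (1 - z))) *
      y ^ (ν * z - 1) * (1 - y) ^ (ν * (1 - z) - 1)) y

/-- The Beta(νz, ν(1-z)) probability distribution on (0,1) (as a measure on ℝ). -/
noncomputable def betaMeas (ν z : ℝ) : Measure ℝ :=
  volume.withDensity (fun y => ENNReal.ofReal (betaDen ν z y))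

/-- Processes `Y` and `μ` taking values in `(0,1)` have the βARC conditional structure with
precision `ν`: for all distinct times and Borel sets `A j, B j ⊆ (0,1)`,
`P(∀j, Y (t j) ∈ A j, μ (t j) ∈ B j) = E[∏ j, 1_{B j}(μ (t j)) · Beta(ν μ, ν(1-μ))(A j)]`,
i.e. conditionally on `μ` the `Y`'s are independent with `Y t ∼ Beta(ν μ t, ν(1-μ t))`. -/
def IsBetaARC {Ω : Type*} [MeasurableSpace Ω] (P : Measure Ω) (ν : ℝ)
    (Y μ : ℕ → Ω → ℝ) : Prop :=
  (∀ t, Measurable (Y t)) ∧ (∀ t, Measurable (μ t)) ∧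
  (∀ t, ∀ᵐ ω ∂P, Y t ω ∈ Set.Ioo (0 : ℝ) 1) ∧
  (∀ t, ∀ᵐ ω ∂P, μ t ω ∈ Set.Ioo (0 : ℝ) 1) ∧
  ∀ (k : ℕ) (t : Fin k → ℕ), Function.Injective t →
    ∀ A B : Fin k → Set ℝ, (∀ j, MeasurableSet (A j)) → (∀ j, MeasurableSet (B j)) →
      (∀ j, A j ⊆ Set.Ioo 0 1) → (∀ j, B j ⊆ Set.Ioo 0 1) →
      P {ω | ∀ j, Y (t j) ω ∈ A j ∧ μ (t j) ω ∈ B j} =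
        ∫⁻ ω, ∏ j, ((B j).indicator 1 (μ (t j) ω) * betaMeas ν (μ (t j) ω) (A j)) ∂P

/-- Strict stationarity of a process: all finite-dimensional joint laws are shift invariant. -/
def StrictlyStationary {Ω E : Type*} [MeasurableSpace Ω] [MeasurableSpace E]
    (P : Measure Ω) (Z : ℕ → Ω → E) : Prop :=
  ∀ (k : ℕ) (t : Fin k → ℕ) (h : ℕ),
    Measure.map (fun ω => fun j => Z (t j + h) ω) P =
      Measure.map (fun ω => fun j => Z (t j) ω) P

/-!
Write `μ t = Φ (x t, T^[t] U₀)` for a fixed measurable `Φ`. Since the law of `U₀` is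
`T`-invariant, `(T^[t] U₀)` is stationary; being independent of the stationary `(x t)`, the pair
process is stationary, hence so is `μ`. At distinct times the βARC structure writes the joint law
of `Y` as a functional of the joint law of `μ`, so `Y` is stationary there, and a time vector with
repetitions is a reindexing of one without.
-/

lemma Real.measurable_Gamma : Measurable Real.Gamma := by
  apply measurable_of_restrict_of_restrict_compl
    (s := Set.range fun n : ℕ => -(n : ℝ)) (Set.countable_range _).measurableSet
  · have := (Set.countable_range fun n : ℕ => -(n : ℝ)).to_subtype
    exact measurable_of_countable _
  · refine (continuousOn_iff_continuous_domRestrict.mp fun x hx => ?_).measurable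
    refine (Real.differentiableAt_Gamma fun m => ?_).continuousAt.continuousWithinAt
    exact fun hxm => hx ⟨m, hxm.symm⟩

lemma measurable_betaDen (ν : ℝ) : Measurable fun p : ℝ × ℝ => betaDen ν p.1 p.2 := by
  have := Real.measurable_Gamma
  simp only [betaDen, Set.indicator_apply]
  exact Measurable.ite (measurableSet_Ioo.preimage measurable_snd) (by fun_prop) measurable_const

lemma measurable_betaMeas_apply (ν : ℝ) {A : Set ℝ} (hA : MeasurableSet A) :
    Measurable fun z => betaMeas ν z A := by
  simp only [betaMeas, withDensity_apply _ hA]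
  exact (measurable_betaDen ν).ennreal_ofReal.lintegral_prod_right'

section StrictlyStationary

variable {Ω E F : Type*} [MeasurableSpace Ω] [MeasurableSpace E] [MeasurableSpace F]
  {P : Measure Ω}

lemma StrictlyStationary.comp {Z : ℕ → Ω → E} (hZ : ∀ t, Measurable (Z t))
    (hs : StrictlyStationary P Z) {f : E → F} (hf : Measurable f) :
    StrictlyStationary P fun t ω => f (Z t ω) := by
  intro k t h
  have hf' : Measurable fun (v : Fin k → E) j => f (v j) := by fun_prop
  have key := congrArg (Measure.map fun v j => f (v j)) (hs k t h)
  rwa [Measure.map_map hf' (measurable_pi_lambda _ fun j => hZ _),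
    Measure.map_map hf' (measurable_pi_lambda _ fun j => hZ _)] at key

lemma exists_injective_comp_eq {α : Type*} {k : ℕ} (t : Fin k → α) :
    ∃ (r : ℕ) (e : Fin r → α) (σ : Fin k → Fin r), Function.Injective e ∧ t = e ∘ σ := by
  let eqv := Finite.equivFin (Set.range t)
  refine ⟨_, fun i => eqv.symm i, fun j => eqv ⟨t j, mem_range_self j⟩,
    Subtype.val_injective.comp eqv.symm.injective, ?_⟩
  funext j
  exact congrArg Subtype.val (eqv.symm_apply_apply ⟨t j, mem_range_self j⟩).symm

lemma strictlyStationary_of_injective {Z : ℕ → Ω → E} (hZ : ∀ t, Measurable (Z t))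
    (hinj : ∀ (r : ℕ) (e : Fin r → ℕ) (h : ℕ), Function.Injective e →
      Measure.map (fun ω i => Z (e i + h) ω) P = Measure.map (fun ω i => Z (e i) ω) P) :
    StrictlyStationary P Z := by
  intro k t h
  obtain ⟨r, e, σ, he, rfl⟩ := exists_injective_comp_eq t
  have hσ : Measurable fun (v : Fin r → E) j => v (σ j) := by fun_prop
  have key := congrArg (Measure.map fun v j => v (σ j)) (hinj r e h he)
  rwa [Measure.map_map hσ (measurable_pi_lambda _ fun i => hZ _),
    Measure.map_map hσ (measurable_pi_lambda _ fun i => hZ _)] at key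

lemma strictlyStationary_iterate {T : E → E} {U : Ω → E} (hU : Measurable U)
    (hT : MeasurePreserving T (P.map U) (P.map U)) :
    StrictlyStationary P fun n ω => T^[n] (U ω) := by
  intro k t h
  have hTt : Measurable fun u j => T^[t j] u :=
    measurable_pi_lambda _ fun j => hT.measurable.iterate _
  have hshift : (fun ω j => T^[t j + h] (U ω)) = (fun u j => T^[t j] u) ∘ T^[h] ∘ U := by
    funext ω j
    exact Function.iterate_add_apply T (t j) h (U ω)
  rw [hshift, ← Measure.map_map hTt ((hT.measurable.iterate h).comp hU),
    ← Measure.map_map (hT.measurable.iterate h) hU, (hT.iterate h).map_eq,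
    Measure.map_map hTt hU]
  rfl

lemma StrictlyStationary.prodMk_of_indepFun [IsFiniteMeasure P] {X : ℕ → Ω → E}
    {Z : ℕ → Ω → F} (hX : ∀ t, Measurable (X t)) (hZ : ∀ t, Measurable (Z t))
    (hXs : StrictlyStationary P X) (hZs : StrictlyStationary P Z)
    (hind : ProbabilityTheory.IndepFun (fun ω t => X t ω) (fun ω t => Z t ω) P) :
    StrictlyStationary P fun t ω => (X t ω, Z t ω) := by
  intro k t h
  have hlaw : ∀ s : Fin k → ℕ, Measure.map (fun ω j => (X (s j) ω, Z (s j) ω)) P =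
      Measure.map (MeasurableEquiv.arrowProdEquivProdArrow E F (Fin k)).symm
        ((Measure.map (fun ω j => X (s j) ω) P).prod (Measure.map (fun ω j => Z (s j) ω) P)) := by
    intro s
    have hXs : Measurable fun ω j => X (s j) ω := measurable_pi_lambda _ fun j => hX _
    have hZs : Measurable fun ω j => Z (s j) ω := measurable_pi_lambda _ fun j => hZ _
    have hind_s : ProbabilityTheory.IndepFun (fun ω j => X (s j) ω) (fun ω j => Z (s j) ω) P :=
      hind.comp (measurable_pi_lambda _ fun j => measurable_pi_apply (s j))
        (measurable_pi_lambda _ fun j => measurable_pi_apply (s j))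
    rw [← (ProbabilityTheory.indepFun_iff_map_prod_eq_prod_map_map hXs.aemeasurable
      hZs.aemeasurable).mp hind_s, Measure.map_map (by fun_prop) (hXs.prodMk hZs)]
    rfl
  rw [hlaw, hlaw, hXs k t h, hZs k t h]

end StrictlyStationary

section BetaARC

variable {Ω : Type*} [MeasurableSpace Ω] {P : Measure Ω} {ν : ℝ} {Y μ : ℕ → Ω → ℝ}

/-- Intersecting `A i` with `(0,1)`, harmless since `Y` lies there a.s., makes the βARC formula
(with `B i = (0,1)`) available for arbitrary Borel sets. -/
lemma IsBetaARC.measure_forall_mem_eq_lintegral_map (hARC : IsBetaARC P ν Y μ) {r : ℕ}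
    {e : Fin r → ℕ} (he : Function.Injective e) {A : Fin r → Set ℝ}
    (hA : ∀ i, MeasurableSet (A i)) :
    P {ω | ∀ i, Y (e i) ω ∈ A i} =
      ∫⁻ v, ∏ i, ((Ioo 0 1).indicator 1 (v i) * betaMeas ν (v i) (A i ∩ Ioo 0 1))
        ∂(Measure.map (fun ω i => μ (e i) ω) P) := by
  obtain ⟨-, hμmeas, hYmem, hμmem, hformula⟩ := hARC
  have hae : ∀ᵐ ω ∂P, ∀ i, Y (e i) ω ∈ Ioo (0 : ℝ) 1 ∧ μ (e i) ω ∈ Ioo (0 : ℝ) 1 :=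
    ae_all_iff.mpr fun i => (hYmem _).and (hμmem _)
  have hsets : {ω | ∀ i, Y (e i) ω ∈ A i} =ᵐ[P]
      {ω | ∀ i, Y (e i) ω ∈ A i ∩ Ioo 0 1 ∧ μ (e i) ω ∈ Ioo 0 1} := by
    filter_upwards [hae] with ω hω
    exact propext ⟨fun hY i => ⟨⟨hY i, (hω i).1⟩, (hω i).2⟩, fun hY i => (hY i).1.1⟩
  rw [measure_congr hsets, hformula r e he _ _ (fun i => (hA i).inter measurableSet_Ioo)
    (fun _ => measurableSet_Ioo) (fun _ => inter_subset_right) (fun _ => subset_rfl),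
    lintegral_map _ (measurable_pi_lambda _ fun i => hμmeas _)]
  refine Finset.measurable_prod _ fun i _ => Measurable.mul ?_ ?_
  · exact (measurable_one.indicator measurableSet_Ioo).comp (measurable_pi_apply i)
  · exact (measurable_betaMeas_apply ν ((hA i).inter measurableSet_Ioo)).comp
      (measurable_pi_apply i)

lemma IsBetaARC.strictlyStationary [IsFiniteMeasure P] (hARC : IsBetaARC P ν Y μ)
    (hμ : StrictlyStationary P μ) : StrictlyStationary P Y := by
  refine strictlyStationary_of_injective hARC.1 fun r e h he => ?_
  have hYvec : ∀ s : Fin r → ℕ, Measurable fun ω i => Y (s i) ω :=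
    fun s => measurable_pi_lambda _ fun i => hARC.1 _
  refine ext_of_generate_finite _ generateFrom_pi.symm isPiSystem_pi ?_ ?_
  · rintro _ ⟨A, hA, rfl⟩
    have hA : ∀ i, MeasurableSet (A i) := fun i => hA i (mem_univ i)
    have hpi : MeasurableSet (univ.pi A) := .univ_pi hA
    rw [Measure.map_apply (hYvec _) hpi, Measure.map_apply (hYvec _) hpi]
    have hshift := hARC.measure_forall_mem_eq_lintegral_map
      (e := fun i => e i + h) (fun _ _ hii => he (add_right_cancel hii)) hA
    rw [hμ r e h, ← hARC.measure_forall_mem_eq_lintegral_map he hA] at hshift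
    simpa only [preimage, mem_univ_pi] using hshift
  · rw [Measure.map_apply (hYvec _) .univ, Measure.map_apply (hYvec _) .univ]
    rfl

end BetaARC

theorem stmt6_general {Ω : Type*} [MeasurableSpace Ω] (P : Measure Ω) [IsProbabilityMeasure P]
    (T : ℝ → ℝ) (hT : Measurable T)
    (lam : Measure ℝ)
    (hinv : ∀ A : Set ℝ, MeasurableSet A → lam (T ⁻¹' A) = lam A)
    (U₀ : Ω → ℝ) (hU₀ : Measurable U₀) (hlaw : Measure.map U₀ P = lam)
    (l : ℕ) (x : ℕ → Ω → (Fin l → ℝ)) (hxmeas : ∀ t, Measurable (x t))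
    (hxstat : StrictlyStationary P x)
    (hindep : ProbabilityTheory.IndepFun U₀ (fun ω => fun t => x t ω) P)
    (ginv hfun : ℝ → ℝ)
    (hginv : Measurable ginv)
    (hhfun : Measurable hfun) (α : ℝ) (β : Fin l → ℝ)
    (ν : ℝ) (Y μ : ℕ → Ω → ℝ)
    (hμ : ∀ t ω, μ t ω = ginv (α + (∑ i, x t ω i * β i) + hfun (T^[t] (U₀ ω))))
    (hARC : IsBetaARC P ν Y μ) :
    StrictlyStationary P Y := by
  subst hlaw
  have hTpres : MeasurePreserving T (P.map U₀) (P.map U₀) :=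
    ⟨hT, Measure.ext fun A hA => by rw [Measure.map_apply hT hA, hinv A hA]⟩
  have hU : ∀ t, Measurable fun ω => T^[t] (U₀ ω) := fun t => (hT.iterate t).comp hU₀
  have hpair : StrictlyStationary P fun t ω => (x t ω, T^[t] (U₀ ω)) :=
    hxstat.prodMk_of_indepFun hxmeas hU (strictlyStationary_iterate hU₀ hTpres)
      (hindep.symm.comp measurable_id (measurable_pi_lambda _ fun t => hT.iterate t))
  let Φ : (Fin l → ℝ) × ℝ → ℝ := fun p => ginv (α + (∑ i, p.1 i * β i) + hfun p.2)
  have hΦ : Measurable Φ := hginv.comp ((measurable_const.add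
    (Finset.measurable_sum _ fun i _ => by fun_prop)).add (hhfun.comp measurable_snd))
  have hμeq : μ = fun t ω => Φ (x t ω, T^[t] (U₀ ω)) := funext fun t => funext (hμ t)
  subst hμeq
  exact hARC.strictlyStationary (hpair.comp (fun t => (hxmeas t).prodMk (hU t)) hΦ)

/-- **Corollary 5, βARC model with random covariates.** Let `T : [0,1] → [0,1]`
be Borel measurable with a `T`-invariant probability measure `lam` with `lam((0,1)) = 1`, and
let `U₀` have law `lam`.  Let `(x t)` be a strictly stationary `ℝ^l`-valued process independent
of `U₀`.  Let `g : (0,1) → ℝ` be Borel measurable and injective with Borel measurable inverse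
`ginv` on its image, `hfun : (0,1) → ℝ` Borel measurable, `α ∈ ℝ`, `β ∈ ℝ^l`.  Assume that for
every `t`, `α + ⟨x t, β⟩ + hfun (T^[t] U₀) ∈ g((0,1))` a.s., and set
`μ t := g⁻¹(α + ⟨x t, β⟩ + hfun (T^[t] U₀))`.  If `Y` has the βARC conditional structure with
`μ` and precision `ν > 0`, then `Y` is strictly stationary. -/
theorem stmt6 {Ω : Type*} [MeasurableSpace Ω] (P : Measure Ω) [IsProbabilityMeasure P]
    (T : ℝ → ℝ) (hT : Measurable T) (hTmaps : Set.MapsTo T (Set.Icc 0 1) (Set.Icc 0 1))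
    (lam : Measure ℝ) [IsProbabilityMeasure lam]
    (hinv : ∀ A : Set ℝ, MeasurableSet A → lam (T ⁻¹' A) = lam A)
    (h01 : lam (Set.Ioo 0 1) = 1)
    (U₀ : Ω → ℝ) (hU₀ : Measurable U₀) (hlaw : Measure.map U₀ P = lam)
    (l : ℕ) (x : ℕ → Ω → (Fin l → ℝ)) (hxmeas : ∀ t, Measurable (x t))
    (hxstat : StrictlyStationary P x)
    (hindep : ProbabilityTheory.IndepFun U₀ (fun ω => fun t => x t ω) P)
    (g ginv hfun : ℝ → ℝ) (hg : Measurable g) (hginj : Set.InjOn g (Set.Ioo 0 1))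
    (hginv : Measurable ginv) (hginvg : ∀ u ∈ Set.Ioo (0 : ℝ) 1, ginv (g u) = u)
    (hhfun : Measurable hfun) (α : ℝ) (β : Fin l → ℝ)
    (himg : ∀ t : ℕ, ∀ᵐ ω ∂P,
      α + (∑ i, x t ω i * β i) + hfun (T^[t] (U₀ ω)) ∈ g '' Set.Ioo 0 1)
    (ν : ℝ) (hν : 0 < ν) (Y μ : ℕ → Ω → ℝ)
    (hμ : ∀ t ω, μ t ω = ginv (α + (∑ i, x t ω i * β i) + hfun (T^[t] (U₀ ω))))
    (hARC : IsBetaARC P ν Y μ) :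
    StrictlyStationary P Y :=
  stmt6_general P T hT lam hinv U₀ hU₀ hlaw l x hxmeas hxstat hindep ginv hfun hginv hhfun α β ν Y μ
    hμ hARC
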